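/- arXiv:1904.00079 — 5 statements merged into one kernel-verified Lean document; each statement's English description precedes it below -/
import Mathlib

section
/- Let u ∈ V and let v ∈ anc(u) be an ancestor of u. Consider two sets of nodes R, R' ⊆ V such that (i) v ∈ R and v ∈ R'; (ii) subtree(u) ∩ R = subtree(u) ∩ R'; and (iii) path(u,v) ∩ R = path(u,v) ∩ R' = ∅. Then the partial benefits at u agree: pB_u(R) = pB_u(R'). -/
open scoped Classical

section TreeDefs

variable {V : Type*}

/-- The set of strict ancestors of `u` in the rooted tree given by `parent`. -/
def ancSet (parent : V → V) (u : V) : Set V :=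
  {v | v ≠ u ∧ ∃ n : ℕ, parent^[n] u = v}

/-- The set of nodes of the subtree rooted at `u` (including `u`). -/
def subtreeSet (parent : V → V) (u : V) : Set V :=
  {x | ∃ n : ℕ, parent^[n] x = u}

/-- The set of nodes strictly between `u` and its ancestor `v`. -/
def pathSet (parent : V → V) (u v : V) : Set V :=
  {w | w ∈ ancSet parent u ∧ v ∈ ancSet parent w}

/-- A node is internal if it has at least one child. -/
def isInternal (parent : V → V) (u : V) : Prop :=
  ∃ w, w ≠ u ∧ parent w = u

/-- `T` is binary with left-child map `lc` and right-child map `rc`. -/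
def isBinary (parent lc rc : V → V) : Prop :=
  ∀ u, isInternal parent u →
    lc u ≠ rc u ∧ parent (lc u) = u ∧ parent (rc u) = u ∧
    lc u ≠ u ∧ rc u ≠ u ∧
    ∀ w, w ≠ u → parent w = u → w = lc u ∨ w = rc u

/-- The usefulness indicator `I_q(u|R)` of node `u` for a query with
summed-out variables `Zq`, with respect to the materialized set `R`. -/
noncomputable def useful {α : Type*} (parent : V → V) (vars : V → Set α)
    (Zq : Set α) (u : V) (R : Set V) : ℝ :=
  if vars u ⊆ Zq ∧ ∀ v ∈ ancSet parent u ∩ R, ¬ vars v ⊆ Zq then 1 else 0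

/-- The expected usefulness `E[I(u|R)]` over the query distribution. -/
noncomputable def eInd {α Q : Type*} [Fintype Q] (parent : V → V) (vars : V → Set α)
    (Z : Q → Set α) (Pr : Q → ℝ) (u : V) (R : Set V) : ℝ :=
  ∑ q : Q, Pr q * useful parent vars (Z q) u R

/-- The utility `U(u) = Σ_{x ∈ subtree(u)} c(x)`. -/
noncomputable def util [Fintype V] (parent : V → V) (c : V → ℝ) (u : V) : ℝ :=
  ∑ x ∈ Finset.univ.filter (fun x => x ∈ subtreeSet parent u), c x

/-- The benefit `B(R) = Σ_{u ∈ R} E[I(u|R)] · U(u)`. -/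
noncomputable def benefit [Fintype V] {α Q : Type*} [Fintype Q]
    (parent : V → V) (vars : V → Set α) (Z : Q → Set α) (Pr : Q → ℝ)
    (c : V → ℝ) (R : Finset V) : ℝ :=
  ∑ u ∈ R, eInd parent vars Z Pr u (↑R) * util parent c u

/-- The partial benefit `pB_u(R) = Σ_{w ∈ R ∩ subtree(u)} E[I(w|R)] · U(w)`. -/
noncomputable def pB [Fintype V] {α Q : Type*} [Fintype Q]
    (parent : V → V) (vars : V → Set α) (Z : Q → Set α) (Pr : Q → ℝ)
    (c : V → ℝ) (u : V) (R : Finset V) : ℝ :=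
  ∑ w ∈ R.filter (fun w => w ∈ subtreeSet parent u),
    eInd parent vars Z Pr w (↑R) * util parent c w

end TreeDefs

/-!
A node `a` that blocks some `w ∈ subtree(u)` in `R` (an ancestor of `w` in `R` with
`vars a ⊆ Z_q`) is either inside `subtree(u)`, hence in `R'` too, or an ancestor of `u`.
In the latter case it cannot lie strictly between `u` and `v`, so it is `v` or above `v`;
then `v ∈ R'` is an ancestor of `w` with `vars v ⊆ vars a`, and blocks `w` in `R'`.
Hence every node of `subtree(u)` has the same usefulness for `R` and `R'`, and the
sums defining `pB_u` agree term by term.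
-/

section

variable {V α : Type*} {parent : V → V}

lemma mem_subtreeSet_self (u : V) : u ∈ subtreeSet parent u := ⟨0, rfl⟩

lemma mem_subtreeSet_or_exists_iterate_eq {u w a : V} {n : ℕ}
    (hw : w ∈ subtreeSet parent u) (ha : parent^[n] w = a) :
    a ∈ subtreeSet parent u ∨ ∃ k, parent^[k] u = a := by
  obtain ⟨m, hm⟩ := hw
  rcases le_or_gt n m with hnm | hmn
  · left
    refine ⟨m - n, ?_⟩
    rw [← ha, ← Function.iterate_add_apply, Nat.sub_add_cancel hnm, hm]
  · right
    refine ⟨n - m, ?_⟩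
    rw [← hm, ← Function.iterate_add_apply, Nat.sub_add_cancel hmn.le, ha]

lemma Function.IsPeriodicPt.iterate_mem_subtreeSet {u : V} {p : ℕ}
    (hu : Function.IsPeriodicPt parent p u) (hp : 0 < p) (k : ℕ) :
    parent^[k] u ∈ subtreeSet parent u := by
  refine ⟨(p - 1) * k, ?_⟩
  have hpk : (p - 1) * k + k = p * k := by
    rw [Nat.sub_one_mul, Nat.sub_add_cancel (Nat.le_mul_of_pos_left k hp)]
  rw [← Function.iterate_add_apply, hpk]
  exact (hu.mul_const k).eq

lemma exists_iterate_eq_of_notMem_pathSet {u v a : V} {j k : ℕ}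
    (hv : parent^[j] u = v) (ha : parent^[k] u = a) (hau : a ≠ u)
    (hpath : a ∉ pathSet parent u v) : ∃ i, parent^[i] v = a := by
  rcases le_or_gt j k with hjk | hkj
  · refine ⟨k - j, ?_⟩
    rw [← hv, ← Function.iterate_add_apply, Nat.sub_add_cancel hjk, ha]
  · by_cases hav : a = v
    · exact ⟨0, hav.symm⟩
    · refine absurd ⟨⟨hau, k, ha⟩, Ne.symm hav, j - k, ?_⟩ hpath
      rw [← ha, ← Function.iterate_add_apply, Nat.sub_add_cancel hkj.le, hv]

lemma vars_subset_of_iterate_eq {vars : V → Set α}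
    (hvars : ∀ u v : V, v ∈ ancSet parent u → vars u ⊆ vars v)
    {v a : V} {i : ℕ} (ha : parent^[i] v = a) : vars v ⊆ vars a := by
  by_cases hav : a = v
  · rw [hav]
  · exact hvars v a ⟨hav, i, ha⟩

lemma exists_ancSet_inter_vars_subset {vars : V → Set α}
    (hvars : ∀ u v : V, v ∈ ancSet parent u → vars u ⊆ vars v)
    {u v w a : V} {R R' : Set V} (hanc : v ∈ ancSet parent u) (hvR' : v ∈ R')
    (hsub : subtreeSet parent u ∩ R = subtreeSet parent u ∩ R')
    (hpR : pathSet parent u v ∩ R = ∅) (hw : w ∈ subtreeSet parent u)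
    (ha : a ∈ ancSet parent w ∩ R) :
    ∃ b ∈ ancSet parent w ∩ R', vars b ⊆ vars a := by
  obtain ⟨⟨haw, n, hn⟩, haR⟩ := ha
  by_cases has : a ∈ subtreeSet parent u
  · have haR' : a ∈ subtreeSet parent u ∩ R' := hsub ▸ ⟨has, haR⟩
    exact ⟨a, ⟨⟨haw, n, hn⟩, haR'.2⟩, subset_rfl⟩
  obtain ⟨k, hk⟩ := (mem_subtreeSet_or_exists_iterate_eq hw hn).resolve_left has
  obtain ⟨hvu, j, hj⟩ := hanc
  have hau : a ≠ u := by
    rintro rfl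
    exact has (mem_subtreeSet_self a)
  have hpath : a ∉ pathSet parent u v := fun h =>
    (Set.eq_empty_iff_forall_notMem.mp hpR) a ⟨h, haR⟩
  obtain ⟨i, hi⟩ := exists_iterate_eq_of_notMem_pathSet hj hk hau hpath
  have hj0 : 0 < j := Nat.pos_of_ne_zero (by rintro rfl; exact hvu hj.symm)
  obtain ⟨m, hm⟩ := hw
  -- If `v = w`, then `u` lies on a cycle of `parent` and so would `a`, inside `subtree(u)`.
  have hvw : v ≠ w := by
    rintro rfl
    have hper : Function.IsPeriodicPt parent (m + j) u := by
      rw [Function.IsPeriodicPt, Function.IsFixedPt, Function.iterate_add_apply, hj, hm]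
    exact has (hk ▸ hper.iterate_mem_subtreeSet (by omega) k)
  refine ⟨v, ⟨⟨hvw, j + m, ?_⟩, hvR'⟩, vars_subset_of_iterate_eq hvars hi⟩
  rw [Function.iterate_add_apply, hm, hj]

lemma useful_eq_of_dominated {vars : V → Set α} {Zq : Set α} {w : V} {R R' : Set V}
    (h : ∀ a ∈ ancSet parent w ∩ R, ∃ b ∈ ancSet parent w ∩ R', vars b ⊆ vars a)
    (h' : ∀ a ∈ ancSet parent w ∩ R', ∃ b ∈ ancSet parent w ∩ R, vars b ⊆ vars a) :
    useful parent vars Zq w R = useful parent vars Zq w R' := by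
  unfold useful
  congr 1
  refine propext (and_congr_right fun _ => ⟨fun hR a ha haZ => ?_, fun hR' a ha haZ => ?_⟩)
  · obtain ⟨b, hb, hba⟩ := h' a ha
    exact hR b hb (hba.trans haZ)
  · obtain ⟨b, hb, hba⟩ := h a ha
    exact hR' b hb (hba.trans haZ)

lemma pB_eq_of_eInd_eq [Fintype V] {Q : Type*} [Fintype Q] {vars : V → Set α}
    {Z : Q → Set α} {Pr : Q → ℝ} {c : V → ℝ} {u : V} {R R' : Finset V}
    (hsub : subtreeSet parent u ∩ (↑R : Set V) = subtreeSet parent u ∩ (↑R' : Set V))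
    (heInd : ∀ w ∈ subtreeSet parent u,
      eInd parent vars Z Pr w (↑R) = eInd parent vars Z Pr w (↑R')) :
    pB parent vars Z Pr c u R = pB parent vars Z Pr c u R' := by
  have hfilter : R.filter (· ∈ subtreeSet parent u) = R'.filter (· ∈ subtreeSet parent u) := by
    ext x
    simpa [and_comm] using Set.ext_iff.mp hsub x
  unfold pB
  rw [hfilter]
  exact Finset.sum_congr rfl fun w hw => by rw [heInd w (Finset.mem_filter.mp hw).2]

end

theorem partial_benefit_local_general {V α Q : Type*} [Fintype V] [Fintype Q]
    (parent : V → V)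
    (vars : V → Set α)
    (hvars : ∀ u v : V, v ∈ ancSet parent u → vars u ⊆ vars v)
    (Z : Q → Set α) (Pr : Q → ℝ)
    (c : V → ℝ)
    (u v : V) (hanc : v ∈ ancSet parent u)
    (R R' : Finset V) (hvR : v ∈ R) (hvR' : v ∈ R')
    (hsub : subtreeSet parent u ∩ (↑R : Set V) = subtreeSet parent u ∩ (↑R' : Set V))
    (hpR : pathSet parent u v ∩ (↑R : Set V) = ∅)
    (hpR' : pathSet parent u v ∩ (↑R' : Set V) = ∅) :
    pB parent vars Z Pr c u R = pB parent vars Z Pr c u R' := by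
  refine pB_eq_of_eInd_eq hsub fun w hw => Finset.sum_congr rfl fun q _ => ?_
  congr 1
  exact useful_eq_of_dominated
    (fun a ha => exists_ancSet_inter_vars_subset hvars hanc hvR' hsub hpR hw ha)
    (fun a ha => exists_ancSet_inter_vars_subset hvars hanc hvR hsub.symm hpR' hw ha)

/-- if `v ∈ anc(u)`, `v ∈ R ∩ R'`, `subtree(u) ∩ R = subtree(u) ∩ R'`
and `path(u,v) ∩ R = path(u,v) ∩ R' = ∅`, then `pB_u(R) = pB_u(R')`. -/
theorem partial_benefit_local {V α Q : Type*} [Fintype V] [DecidableEq V] [Fintype Q]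
    (root : V) (parent : V → V)
    (hroot : parent root = root)
    (hreach : ∀ u, ∃ n : ℕ, parent^[n] u = root)
    (vars : V → Set α)
    (hvars : ∀ u v : V, v ∈ ancSet parent u → vars u ⊆ vars v)
    (Z : Q → Set α) (Pr : Q → ℝ)
    (hPr0 : ∀ q, 0 ≤ Pr q) (hPr1 : ∑ q : Q, Pr q = 1)
    (c : V → ℝ) (hc : ∀ x, 0 ≤ c x)
    (u v : V) (hanc : v ∈ ancSet parent u)
    (R R' : Finset V) (hvR : v ∈ R) (hvR' : v ∈ R')
    (hsub : subtreeSet parent u ∩ (↑R : Set V) = subtreeSet parent u ∩ (↑R' : Set V))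
    (hpR : pathSet parent u v ∩ (↑R : Set V) = ∅)
    (hpR' : pathSet parent u v ∩ (↑R' : Set V) = ∅) :
    pB parent vars Z Pr c u R = pB parent vars Z Pr c u R' :=
  partial_benefit_local_general parent vars hvars Z Pr c u v hanc R R' hvR hvR' hsub hpR hpR'
end

section
/- Let R ⊆ V and u ∈ V \ R. Let hsd(u,R) = { v ∈ subtree(u) ∩ R : v ≠ u and path(v,u) ∩ R = ∅ } be the set of descendants of u lying in R whose lowest ancestor in R ∪ {u} is u, and let lsa(u,R) denote the lowest ancestor of u in R if anc(u) ∩ R ≠ ∅ (the unique v ∈ anc(u) ∩ R with path(u,v) ∩ R = ∅), with the convention E[I(u|{lsa(u,R)})] := E[I(u|∅)] when anc(u) ∩ R = ∅. Then the marginal benefit satisfies B(R ∪ {u}) − B(R) = E[I(u|{lsa(u,R)})] · ( U(u) − Σ_{v ∈ hsd(u,R)} U(v) ). -/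
/-!
Inserting `u` into `R` leaves `E[I(u|R)]` unchanged and can only affect nodes `w ∈ R` below `u`.
If some node of `R` lies strictly between `w` and `u`, it already blocks every query that `u`
would block, since `vars` grows towards the root. Otherwise `w ∈ hsd(u,R)`: the ancestors of `w`
in `R` are those of `u`, and `vars w ⊆ vars u`, so `I_q(w|R ∪ {u}) = I_q(w|R) - I_q(u|R)`.
Summing over `R` gives the formula with `E[I(u|R)]`, which equals `E[I(u|{lsa(u,R)})]` because
the lowest ancestor in `R` is the first one to block a query.
-/

open scoped Classical

section RootedTree

variable {V : Type*} {parent : V → V} {root : V}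

theorem eq_root_of_iterate_eq_self (hroot : parent root = root)
    (hreach : ∀ u, ∃ n : ℕ, parent^[n] u = root) {w : V} {n : ℕ} (hn : 0 < n)
    (h : parent^[n] w = w) : w = root := by
  obtain ⟨m, hm⟩ := hreach w
  have hle : m ≤ n * (m + 1) := by nlinarith
  calc w = parent^[n * (m + 1)] w := ((Function.IsPeriodicPt.mul_const h (m + 1)).eq).symm
    _ = parent^[n * (m + 1) - m] (parent^[m] w) := by
        rw [← Function.iterate_add_apply, Nat.sub_add_cancel hle]
    _ = root := by rw [hm, Function.iterate_fixed hroot]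

theorem ancSet_asymm (hroot : parent root = root) (hreach : ∀ u, ∃ n : ℕ, parent^[n] u = root)
    {u w : V} (h : w ∈ ancSet parent u) : u ∉ ancSet parent w := by
  rintro ⟨-, b, hb⟩
  obtain ⟨hne, a, ha⟩ := h
  have ha0 : a ≠ 0 := by rintro rfl; exact hne ha.symm
  have hcyc : parent^[b + a] u = u := by rw [Function.iterate_add_apply, ha, hb]
  obtain rfl := eq_root_of_iterate_eq_self hroot hreach (by omega) hcyc
  exact hne (by rw [← ha, Function.iterate_fixed hroot])

theorem ancSet_trans (hroot : parent root = root) (hreach : ∀ u, ∃ n : ℕ, parent^[n] u = root)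
    {x u w : V} (hx : x ∈ ancSet parent u) (hu : u ∈ ancSet parent w) : x ∈ ancSet parent w := by
  refine ⟨?_, ?_⟩
  · rintro rfl
    exact ancSet_asymm hroot hreach hx hu
  · obtain ⟨-, k, hk⟩ := hx
    obtain ⟨-, m, hm⟩ := hu
    exact ⟨k + m, by rw [Function.iterate_add_apply, hm, hk]⟩

/-- The ancestors of `u` form a chain. -/
theorem mem_ancSet_of_notMem_pathSet {u v x : V} (hv : v ∈ ancSet parent u)
    (hx : x ∈ ancSet parent u) (hxv : x ≠ v) (hpath : x ∉ pathSet parent u v) :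
    x ∈ ancSet parent v := by
  obtain ⟨-, m, hm⟩ := hv
  obtain ⟨hxu, n, hn⟩ := hx
  rcases le_total n m with h | h
  · refine absurd ⟨⟨hxu, n, hn⟩, Ne.symm hxv, m - n, ?_⟩ hpath
    rw [← hn, ← Function.iterate_add_apply, Nat.sub_add_cancel h, hm]
  · refine ⟨hxv, n - m, ?_⟩
    rw [← hm, ← Function.iterate_add_apply, Nat.sub_add_cancel h, hn]

theorem ancSet_inter_eq_of_pathSet_inter_eq_empty (hroot : parent root = root)
    (hreach : ∀ u, ∃ n : ℕ, parent^[n] u = root) {u w : V} {S : Set V} (hu : u ∉ S)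
    (hanc : u ∈ ancSet parent w) (hpath : pathSet parent w u ∩ S = ∅) :
    ancSet parent w ∩ S = ancSet parent u ∩ S := by
  ext x
  constructor
  · rintro ⟨hx, hxS⟩
    have hxu : x ≠ u := by rintro rfl; exact hu hxS
    have hxpath : x ∉ pathSet parent w u := fun h => (hpath ▸ ⟨h, hxS⟩ : x ∈ (∅ : Set V))
    exact ⟨mem_ancSet_of_notMem_pathSet hanc hx hxu hxpath, hxS⟩
  · rintro ⟨hx, hxS⟩
    exact ⟨ancSet_trans hroot hreach hx hanc, hxS⟩

theorem mem_ancSet_iff_mem_subtreeSet {u w : V} :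
    u ∈ ancSet parent w ↔ w ∈ subtreeSet parent u ∧ w ≠ u := by
  rw [ne_comm, and_comm]
  rfl

end RootedTree

section Usefulness

variable {V α : Type*} {parent : V → V} {vars : V → Set α} {Zq : Set α}

theorem useful_congr {u : V} {S T : Set V} (h : ancSet parent u ∩ S = ancSet parent u ∩ T) :
    useful parent vars Zq u S = useful parent vars Zq u T := by
  rw [useful, useful, h]

theorem useful_eq_zero_of_not_subset {u : V} {S : Set V} (h : ¬ vars u ⊆ Zq) :
    useful parent vars Zq u S = 0 :=
  if_neg fun hu => h hu.1

theorem useful_eq_zero_of_mem_ancSet {u v : V} {S : Set V} (hv : v ∈ ancSet parent u ∩ S)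
    (hvZ : vars v ⊆ Zq) : useful parent vars Zq u S = 0 :=
  if_neg fun hu => hu.2 v hv hvZ

theorem useful_insert (u w : V) (S : Set V) :
    useful parent vars Zq w (insert u S) =
      if u ∈ ancSet parent w ∧ vars u ⊆ Zq then 0 else useful parent vars Zq w S := by
  unfold useful
  by_cases h : u ∈ ancSet parent w ∧ vars u ⊆ Zq
  · rw [if_pos h, if_neg]
    exact fun hw => hw.2 u ⟨h.1, Set.mem_insert u S⟩ h.2
  · grind

theorem useful_insert_self (u : V) (S : Set V) :
    useful parent vars Zq u (insert u S) = useful parent vars Zq u S := by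
  rw [useful_insert, if_neg fun h => h.1.1 rfl]

end Usefulness

section MarginalBenefit

variable {V α : Type*} {parent : V → V} {root : V} {vars : V → Set α}

theorem useful_insert_eq_sub_ite (hroot : parent root = root)
    (hreach : ∀ u, ∃ n : ℕ, parent^[n] u = root)
    (hvars : ∀ u v : V, v ∈ ancSet parent u → vars u ⊆ vars v)
    (Zq : Set α) {u : V} {S : Set V} (hu : u ∉ S) (w : V) :
    useful parent vars Zq w (insert u S) = useful parent vars Zq w S -
      if w ∈ subtreeSet parent u ∧ w ≠ u ∧ pathSet parent w u ∩ S = ∅ then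
        useful parent vars Zq u S else 0 := by
  by_cases hw : w ∈ subtreeSet parent u ∧ w ≠ u ∧ pathSet parent w u ∩ S = ∅
  · obtain ⟨hsub, hne, hpath⟩ := hw
    have hanc : u ∈ ancSet parent w := mem_ancSet_iff_mem_subtreeSet.2 ⟨hsub, hne⟩
    rw [if_pos ⟨hsub, hne, hpath⟩, useful_insert]
    by_cases hZu : vars u ⊆ Zq
    · have hwZ : vars w ⊆ Zq := (hvars w u hanc).trans hZu
      have hS := ancSet_inter_eq_of_pathSet_inter_eq_empty hroot hreach hu hanc hpath
      rw [if_pos ⟨hanc, hZu⟩, eq_comm, sub_eq_zero]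
      simp only [useful, hS, hwZ, hZu, true_and]
    · rw [if_neg fun h => hZu h.2, useful_eq_zero_of_not_subset hZu, sub_zero]
  · rw [if_neg hw, sub_zero, useful_insert, ite_eq_right_iff]
    rintro ⟨hanc, hZu⟩
    obtain ⟨hsub, hne⟩ := mem_ancSet_iff_mem_subtreeSet.1 hanc
    obtain ⟨v, ⟨hvw, hvu⟩, hvS⟩ :=
      Set.nonempty_iff_ne_empty.2 fun hpath => hw ⟨hsub, hne, hpath⟩
    exact (useful_eq_zero_of_mem_ancSet ⟨hvw, hvS⟩ ((hvars v u hvu).trans hZu)).symm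

/-- Every other node of `S` above `u` lies above `v`, and `vars` only grows towards the root. -/
theorem useful_singleton_of_lowest (hvars : ∀ u v : V, v ∈ ancSet parent u → vars u ⊆ vars v)
    (Zq : Set α) {u v : V} {S : Set V} (hvS : v ∈ S) (hv : v ∈ ancSet parent u)
    (hpath : pathSet parent u v ∩ S = ∅) :
    useful parent vars Zq u {v} = useful parent vars Zq u S := by
  refine if_congr (and_congr_right fun _ => ⟨fun h x ⟨hx, hxS⟩ hxZ => ?_,
    fun h x ⟨hx, hxv⟩ => h x ⟨hx, hxv ▸ hvS⟩⟩) rfl rfl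
  by_cases hxv : x = v
  · exact h x ⟨hx, hxv⟩ hxZ
  · have hxpath : x ∉ pathSet parent u v := fun h => (hpath ▸ ⟨h, hxS⟩ : x ∈ (∅ : Set V))
    have hvx := hvars v x (mem_ancSet_of_notMem_pathSet hv hx hxv hxpath)
    exact h v ⟨hv, rfl⟩ (hvx.trans hxZ)

variable {Q : Type*} [Fintype Q]

theorem eInd_insert_eq_sub_ite (hroot : parent root = root)
    (hreach : ∀ u, ∃ n : ℕ, parent^[n] u = root)
    (hvars : ∀ u v : V, v ∈ ancSet parent u → vars u ⊆ vars v)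
    (Z : Q → Set α) (Pr : Q → ℝ) {u : V} {S : Set V} (hu : u ∉ S) (w : V) :
    eInd parent vars Z Pr w (insert u S) = eInd parent vars Z Pr w S -
      if w ∈ subtreeSet parent u ∧ w ≠ u ∧ pathSet parent w u ∩ S = ∅ then
        eInd parent vars Z Pr u S else 0 := by
  simp only [eInd, useful_insert_eq_sub_ite hroot hreach hvars _ hu w, mul_sub,
    Finset.sum_sub_distrib]
  split_ifs <;> simp

theorem eInd_singleton_of_lowest (hvars : ∀ u v : V, v ∈ ancSet parent u → vars u ⊆ vars v)
    (Z : Q → Set α) (Pr : Q → ℝ) {u v : V} {S : Set V} (hvS : v ∈ S)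
    (hv : v ∈ ancSet parent u) (hpath : pathSet parent u v ∩ S = ∅) :
    eInd parent vars Z Pr u {v} = eInd parent vars Z Pr u S := by
  simp only [eInd, useful_singleton_of_lowest hvars _ hvS hv hpath]

theorem eInd_eq_of_ancSet_inter_eq (Z : Q → Set α) (Pr : Q → ℝ) {u : V} {S T : Set V}
    (h : ancSet parent u ∩ S = ancSet parent u ∩ T) :
    eInd parent vars Z Pr u S = eInd parent vars Z Pr u T := by
  simp only [eInd, useful_congr h]

theorem benefit_insert_sub_benefit [Fintype V] [DecidableEq V] (hroot : parent root = root)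
    (hreach : ∀ u, ∃ n : ℕ, parent^[n] u = root)
    (hvars : ∀ u v : V, v ∈ ancSet parent u → vars u ⊆ vars v)
    (Z : Q → Set α) (Pr : Q → ℝ) (c : V → ℝ) {R : Finset V} {u : V} (hu : u ∉ R) :
    benefit parent vars Z Pr c (insert u R) - benefit parent vars Z Pr c R =
      eInd parent vars Z Pr u ↑R *
        (util parent c u -
          ∑ w ∈ R.filter (fun w => w ∈ subtreeSet parent u ∧ w ≠ u ∧
              pathSet parent w u ∩ (↑R : Set V) = ∅),
            util parent c w) := by
  have hself : eInd parent vars Z Pr u ↑(insert u R) = eInd parent vars Z Pr u ↑R := by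
    simp only [eInd, Finset.coe_insert, useful_insert_self]
  unfold benefit
  rw [Finset.sum_insert hu, hself, Finset.coe_insert]
  simp only [eInd_insert_eq_sub_ite hroot hreach hvars Z Pr (Finset.mem_coe.not.2 hu), sub_mul,
    ite_mul, zero_mul, Finset.sum_sub_distrib, ← Finset.sum_filter, ← Finset.mul_sum]
  ring

end MarginalBenefit

theorem marginal_benefit_formula_general {V α Q : Type*} [Fintype V] [DecidableEq V] [Fintype Q]
    (root : V) (parent : V → V)
    (hroot : parent root = root)
    (hreach : ∀ u, ∃ n : ℕ, parent^[n] u = root)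
    (vars : V → Set α)
    (hvars : ∀ u v : V, v ∈ ancSet parent u → vars u ⊆ vars v)
    (Z : Q → Set α) (Pr : Q → ℝ)
    (c : V → ℝ)
    (R : Finset V) (u : V) (hu : u ∉ R) :
    (ancSet parent u ∩ (↑R : Set V) = ∅ →
      benefit parent vars Z Pr c (insert u R) - benefit parent vars Z Pr c R =
        eInd parent vars Z Pr u ∅ *
          (util parent c u -
            ∑ w ∈ R.filter (fun w => w ∈ subtreeSet parent u ∧ w ≠ u ∧
                pathSet parent w u ∩ (↑R : Set V) = ∅),
              util parent c w)) ∧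
    (∀ v ∈ R, v ∈ ancSet parent u → pathSet parent u v ∩ (↑R : Set V) = ∅ →
      benefit parent vars Z Pr c (insert u R) - benefit parent vars Z Pr c R =
        eInd parent vars Z Pr u {v} *
          (util parent c u -
            ∑ w ∈ R.filter (fun w => w ∈ subtreeSet parent u ∧ w ≠ u ∧
                pathSet parent w u ∩ (↑R : Set V) = ∅),
              util parent c w)) := by
  rw [benefit_insert_sub_benefit hroot hreach hvars Z Pr c hu]
  refine ⟨fun hanc => ?_, fun v hvR hv hpath => ?_⟩
  · rw [eInd_eq_of_ancSet_inter_eq Z Pr (by rw [Set.inter_empty, hanc])]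
  · rw [eInd_singleton_of_lowest hvars Z Pr (Finset.mem_coe.2 hvR) hv hpath]

/-- Marginal benefit: for `R ⊆ V` and `u ∉ R`, with
`hsd(u,R) = {v ∈ subtree(u) ∩ R : v ≠ u, path(v,u) ∩ R = ∅}` and `lsa(u,R)`
the lowest ancestor of `u` in `R` (with `E[I(u|{lsa(u,R)})] := E[I(u|∅)]`
when `anc(u) ∩ R = ∅`),
`B(R ∪ {u}) − B(R) = E[I(u|{lsa(u,R)})] · (U(u) − Σ_{v ∈ hsd(u,R)} U(v))`. -/
theorem marginal_benefit_formula {V α Q : Type*} [Fintype V] [DecidableEq V] [Fintype Q]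
    (root : V) (parent : V → V)
    (hroot : parent root = root)
    (hreach : ∀ u, ∃ n : ℕ, parent^[n] u = root)
    (vars : V → Set α)
    (hvars : ∀ u v : V, v ∈ ancSet parent u → vars u ⊆ vars v)
    (Z : Q → Set α) (Pr : Q → ℝ)
    (hPr0 : ∀ q, 0 ≤ Pr q) (hPr1 : ∑ q : Q, Pr q = 1)
    (c : V → ℝ) (hc : ∀ x, 0 ≤ c x)
    (R : Finset V) (u : V) (hu : u ∉ R) :
    (ancSet parent u ∩ (↑R : Set V) = ∅ →
      benefit parent vars Z Pr c (insert u R) - benefit parent vars Z Pr c R =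
        eInd parent vars Z Pr u ∅ *
          (util parent c u -
            ∑ w ∈ R.filter (fun w => w ∈ subtreeSet parent u ∧ w ≠ u ∧
                pathSet parent w u ∩ (↑R : Set V) = ∅),
              util parent c w)) ∧
    (∀ v ∈ R, v ∈ ancSet parent u → pathSet parent u v ∩ (↑R : Set V) = ∅ →
      benefit parent vars Z Pr c (insert u R) - benefit parent vars Z Pr c R =
        eInd parent vars Z Pr u {v} *
          (util parent c u -
            ∑ w ∈ R.filter (fun w => w ∈ subtreeSet parent u ∧ w ≠ u ∧
                pathSet parent w u ∩ (↑R : Set V) = ∅),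
              util parent c w)) :=
  marginal_benefit_formula_general root parent hroot hreach vars hvars Z Pr c R u hu
end

section
/- Let k be a positive integer and let R_0 = ∅, R_{i+1} = R_i ∪ {u_i} where u_i ∈ V \ R_i maximizes the marginal benefit B(R_i ∪ {u}) − B(R_i) over u ∈ V \ R_i, for i = 0, …, k−1. Then the greedy solution satisfies B(R_k) ≥ (1 − 1/e) · max{ B(R) : R ⊆ V, |R| ≤ k }. -/
open scoped Classical

/-!
For a fixed query, the useful nodes of `R` are the topmost nodes of `R` whose
variables lie in `Z_q`, so their subtrees are pairwise disjoint and their union is the union of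
the subtrees of all nodes of `R` whose variables lie in `Z_q`. Hence `B` is a nonnegative
combination of weighted coverage functions, which is monotone and submodular, and the classical
greedy analysis of Nemhauser, Wolsey and Fisher applies: each greedy step closes at least a
`1/k` fraction of the gap to `B(R)`, so after `k` steps the gap is at most
`(1 - 1/k)^k B(R) ≤ B(R)/e`.
-/

section Greedy

variable {ι : Type*} [DecidableEq ι]

def marginalGain (f : Finset ι → ℝ) (S : Finset ι) (u : ι) : ℝ :=
  f (insert u S) - f S

/-- For monotone `f` this is equivalent to submodularity. -/
def BoundedByMarginalGains (f : Finset ι → ℝ) : Prop :=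
  ∀ S T : Finset ι, f T ≤ f S + ∑ u ∈ T \ S, marginalGain f S u

lemma boundedByMarginalGains_sum_mul {Q : Type*} [Fintype Q] {p : Q → ℝ} (hp : ∀ q, 0 ≤ p q)
    {g : Q → Finset ι → ℝ} (hg : ∀ q, BoundedByMarginalGains (g q)) :
    BoundedByMarginalGains fun S => ∑ q, p q * g q S := by
  intro S T
  calc ∑ q, p q * g q T
      ≤ ∑ q, p q * (g q S + ∑ u ∈ T \ S, marginalGain (g q) S u) :=
        Finset.sum_le_sum fun q _ => mul_le_mul_of_nonneg_left (hg q S T) (hp q)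
    _ = ∑ q, p q * g q S + ∑ u ∈ T \ S, marginalGain (fun S => ∑ q, p q * g q S) S u := by
        simp only [marginalGain, mul_add, Finset.sum_add_distrib, Finset.mul_sum, mul_sub,
          Finset.sum_sub_distrib]
        congr 2 <;> exact Finset.sum_comm

variable {f : Finset ι → ℝ}

lemma sub_le_mul_marginalGain (hmono : Monotone f) (hf : BoundedByMarginalGains f)
    {k : ℕ} {R S : Finset ι} (hR : R.card ≤ k) {u : ι}
    (hu : ∀ w ∉ S, marginalGain f S w ≤ marginalGain f S u) :
    f R - f S ≤ k * marginalGain f S u := by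
  have hgain : 0 ≤ marginalGain f S u := sub_nonneg.2 (hmono (Finset.subset_insert u S))
  have hcard : ((R \ S).card : ℝ) ≤ k := by
    exact_mod_cast (Finset.card_le_card Finset.sdiff_subset).trans hR
  calc f R - f S ≤ ∑ w ∈ R \ S, marginalGain f S w := sub_le_iff_le_add'.2 (hf S R)
    _ ≤ (R \ S).card * marginalGain f S u := by
        simpa only [nsmul_eq_mul] using
          Finset.sum_le_card_nsmul _ _ _ fun w hw => hu w (Finset.mem_sdiff.1 hw).2
    _ ≤ k * marginalGain f S u := mul_le_mul_of_nonneg_right hcard hgain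

lemma sub_insert_le_one_sub_inv_mul (hmono : Monotone f) (hf : BoundedByMarginalGains f)
    {k : ℕ} (hk : 0 < k) {R S : Finset ι} (hR : R.card ≤ k) {u : ι}
    (hu : ∀ w ∉ S, marginalGain f S w ≤ marginalGain f S u) :
    f R - f (insert u S) ≤ (1 - 1 / k) * (f R - f S) := by
  have hk' : (0 : ℝ) < k := by exact_mod_cast hk
  have hstep := sub_le_mul_marginalGain hmono hf hR hu
  unfold marginalGain at hstep
  have : (f R - f S) / k ≤ f (insert u S) - f S := by rwa [div_le_iff₀' hk']
  rw [one_sub_mul, one_div_mul_eq_div]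
  linarith

lemma sub_greedy_le_pow (hmono : Monotone f) (hf : BoundedByMarginalGains f)
    {k : ℕ} (hk : 0 < k) {R : Finset ι} (hR : R.card ≤ k) (S : ℕ → Finset ι)
    (hgreedy : ∀ i < k, ∃ u, S (i + 1) = insert u (S i) ∧
      ∀ w ∉ S i, marginalGain f (S i) w ≤ marginalGain f (S i) u) :
    ∀ j ≤ k, f R - f (S j) ≤ (1 - 1 / k) ^ j * (f R - f (S 0)) := by
  have hq : (0 : ℝ) ≤ 1 - 1 / k := by
    rw [sub_nonneg, div_le_one (by exact_mod_cast hk)]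
    exact_mod_cast hk
  intro j hj
  induction j with
  | zero => simp
  | succ j ih =>
    obtain ⟨u, hS, hu⟩ := hgreedy j hj
    calc f R - f (S (j + 1)) ≤ (1 - 1 / k) * (f R - f (S j)) := by
          rw [hS]; exact sub_insert_le_one_sub_inv_mul hmono hf hk hR hu
      _ ≤ (1 - 1 / k) * ((1 - 1 / k) ^ j * (f R - f (S 0))) :=
          mul_le_mul_of_nonneg_left (ih (Nat.le_of_succ_le hj)) hq
      _ = (1 - 1 / k) ^ (j + 1) * (f R - f (S 0)) := by ring

theorem one_sub_inv_exp_mul_le_greedy (hmono : Monotone f) (hf : BoundedByMarginalGains f)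
    (hf0 : f ∅ = 0) {k : ℕ} (hk : 0 < k) {R : Finset ι} (hR : R.card ≤ k)
    (S : ℕ → Finset ι) (hS0 : S 0 = ∅)
    (hgreedy : ∀ i < k, ∃ u, S (i + 1) = insert u (S i) ∧
      ∀ w ∉ S i, marginalGain f (S i) w ≤ marginalGain f (S i) u) :
    (1 - 1 / Real.exp 1) * f R ≤ f (S k) := by
  have hgap := sub_greedy_le_pow hmono hf hk hR S hgreedy k le_rfl
  rw [hS0, hf0, sub_zero] at hgap
  have hR0 : 0 ≤ f R := hf0 ▸ hmono (Finset.empty_subset R)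
  have hpow : (1 - 1 / k : ℝ) ^ k ≤ 1 / Real.exp 1 := by
    rw [one_div (Real.exp 1), ← Real.exp_neg]
    exact Real.one_sub_div_pow_le_exp_neg (by exact_mod_cast hk)
  nlinarith [mul_le_mul_of_nonneg_right hpow hR0]

end Greedy

section Coverage

variable {ι X : Type*} [DecidableEq X] (A : ι → Finset X) {w : X → ℝ}

lemma monotone_sum_biUnion (hw : ∀ x, 0 ≤ w x) :
    Monotone fun S : Finset ι => ∑ x ∈ S.biUnion A, w x :=
  fun _ _ h => Finset.sum_le_sum_of_subset_of_nonneg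
    (Finset.biUnion_subset_biUnion_of_subset_left A h) fun x _ _ => hw x

lemma sum_union_le_of_nonneg (hw : ∀ x, 0 ≤ w x) (s t : Finset X) :
    ∑ x ∈ s ∪ t, w x ≤ ∑ x ∈ s, w x + ∑ x ∈ t, w x := by
  rw [← Finset.sum_union_inter]
  exact le_add_of_nonneg_right (Finset.sum_nonneg fun x _ => hw x)

lemma boundedByMarginalGains_sum_biUnion [DecidableEq ι] (hw : ∀ x, 0 ≤ w x) :
    BoundedByMarginalGains fun S : Finset ι => ∑ x ∈ S.biUnion A, w x := by
  intro S T
  have hgain : ∀ u, marginalGain (fun S : Finset ι => ∑ x ∈ S.biUnion A, w x) S u =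
      ∑ x ∈ A u \ S.biUnion A, w x := fun u => by
    rw [marginalGain, Finset.biUnion_insert, ← Finset.sdiff_union_self_eq_union,
      Finset.sum_union Finset.sdiff_disjoint, add_sub_cancel_right]
  have hcover : T.biUnion A ⊆ S.biUnion A ∪ (T \ S).biUnion fun u => A u \ S.biUnion A := by
    intro x hx
    obtain ⟨u, huT, hxu⟩ := Finset.mem_biUnion.1 hx
    by_cases hxS : x ∈ S.biUnion A
    · exact Finset.mem_union_left _ hxS
    · have huS : u ∉ S := fun huS => hxS (Finset.mem_biUnion.2 ⟨u, huS, hxu⟩)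
      exact Finset.mem_union_right _ (Finset.mem_biUnion.2
        ⟨u, Finset.mem_sdiff.2 ⟨huT, huS⟩, Finset.mem_sdiff.2 ⟨hxu, hxS⟩⟩)
  have hsubadd : ∀ s t : Finset X, ∑ x ∈ s ∪ t, w x ≤ ∑ x ∈ s, w x + ∑ x ∈ t, w x :=
    sum_union_le_of_nonneg hw
  calc ∑ x ∈ T.biUnion A, w x
      ≤ ∑ x ∈ S.biUnion A ∪ (T \ S).biUnion (fun u => A u \ S.biUnion A), w x :=
        Finset.sum_le_sum_of_subset_of_nonneg hcover fun x _ _ => hw x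
    _ ≤ ∑ x ∈ S.biUnion A, w x + ∑ u ∈ T \ S, ∑ x ∈ A u \ S.biUnion A, w x := by
        refine (hsubadd _ _).trans (add_le_add le_rfl ?_)
        rw [← Finset.sup_eq_biUnion]
        exact Finset.apply_sup_le_sum (f := fun s => ∑ x ∈ s, w x) Finset.sum_empty
          (hsubadd _ _) _
    _ = _ := by simp only [hgain]

end Coverage

section Tree

variable {V : Type*} {parent : V → V}

lemma mem_ancSet_iff {u v : V} : v ∈ ancSet parent u ↔ v ≠ u ∧ u ∈ subtreeSet parent v :=
  Iff.rfl

lemma mem_subtreeSet_trans {u v x : V} (hx : x ∈ subtreeSet parent u)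
    (hu : u ∈ subtreeSet parent v) : x ∈ subtreeSet parent v := by
  obtain ⟨m, rfl⟩ := hx
  obtain ⟨n, rfl⟩ := hu
  exact ⟨n + m, Function.iterate_add_apply parent n m x⟩

lemma mem_subtreeSet_total {u v x : V} (hu : x ∈ subtreeSet parent u)
    (hv : x ∈ subtreeSet parent v) :
    u ∈ subtreeSet parent v ∨ v ∈ subtreeSet parent u := by
  obtain ⟨m, rfl⟩ := hu
  obtain ⟨n, rfl⟩ := hv
  rcases le_total m n with h | h
  · exact Or.inl ⟨n - m, by rw [← Function.iterate_add_apply, Nat.sub_add_cancel h]⟩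
  · exact Or.inr ⟨m - n, by rw [← Function.iterate_add_apply, Nat.sub_add_cancel h]⟩

variable {root : V}

noncomputable def depth (hreach : ∀ u, ∃ n : ℕ, parent^[n] u = root) (u : V) : ℕ :=
  Nat.find (hreach u)

lemma depth_lt_of_mem_ancSet (hroot : parent root = root)
    (hreach : ∀ u, ∃ n : ℕ, parent^[n] u = root) {u v : V} (hv : v ∈ ancSet parent u) :
    depth hreach v < depth hreach u := by
  obtain ⟨hvu, n, rfl⟩ := hv
  set d := depth hreach u
  have hd : parent^[d] u = root := Nat.find_spec (hreach u)
  have hn : n ≠ 0 := by rintro rfl; exact hvu rfl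
  have hd0 : d ≠ 0 := by
    intro h
    rw [h, Function.iterate_zero_apply] at hd
    subst hd
    exact hvu (Function.iterate_fixed hroot n)
  -- `d - n` is truncated: when `n > d`, `parent^[n] u` is already the fixed point `root`
  have hroot_after : parent^[d - n] (parent^[n] u) = root := by
    rw [← Function.iterate_add_apply, show d - n + n = n - d + d by omega,
      Function.iterate_add_apply, hd, Function.iterate_fixed hroot]
  exact (Nat.find_min' (hreach _) hroot_after).trans_lt (by omega)

end Tree

section Benefit

variable {V α : Type*} [Fintype V] {parent : V → V}

noncomputable def subtreeFinset (parent : V → V) (u : V) : Finset V :=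
  Finset.univ.filter (· ∈ subtreeSet parent u)

/-- The nodes whose cost `u` saves for the query `Zq`, provided no ancestor of `u` already
does. -/
noncomputable def queryCover (parent : V → V) (vars : V → Set α) (Zq : Set α) (u : V) :
    Finset V :=
  if vars u ⊆ Zq then subtreeFinset parent u else ∅

lemma mem_subtreeFinset {u x : V} : x ∈ subtreeFinset parent u ↔ x ∈ subtreeSet parent u := by
  simp [subtreeFinset]

lemma mem_queryCover {vars : V → Set α} {Zq : Set α} {u x : V} :
    x ∈ queryCover parent vars Zq u ↔ vars u ⊆ Zq ∧ x ∈ subtreeSet parent u := by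
  unfold queryCover
  split_ifs with h <;> simp [h, mem_subtreeFinset]

variable [DecidableEq V] {root : V} {vars : V → Set α} {Zq : Set α} {R : Finset V}

lemma pairwiseDisjoint_subtreeFinset_useful :
    (R.filter fun u => vars u ⊆ Zq ∧ ∀ v ∈ ancSet parent u ∩ R, ¬ vars v ⊆ Zq :
      Set V).PairwiseDisjoint (subtreeFinset parent) := by
  intro u hu v hv huv
  simp only [Finset.coe_filter, Set.mem_ofPred_eq] at hu hv
  refine Finset.disjoint_left.2 fun x hxu hxv => ?_
  rw [mem_subtreeFinset] at hxu hxv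
  rcases mem_subtreeSet_total hxu hxv with h | h
  · exact hu.2.2 v ⟨mem_ancSet_iff.2 ⟨huv.symm, h⟩, hv.1⟩ hv.2.1
  · exact hv.2.2 u ⟨mem_ancSet_iff.2 ⟨huv, h⟩, hu.1⟩ hu.2.1

lemma biUnion_subtreeFinset_useful (hroot : parent root = root)
    (hreach : ∀ u, ∃ n : ℕ, parent^[n] u = root) :
    (R.filter fun u => vars u ⊆ Zq ∧ ∀ v ∈ ancSet parent u ∩ R, ¬ vars v ⊆ Zq).biUnion
      (subtreeFinset parent) = R.biUnion (queryCover parent vars Zq) := by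
  ext x
  simp only [Finset.mem_biUnion, Finset.mem_filter, mem_queryCover, mem_subtreeFinset]
  constructor
  · rintro ⟨u, ⟨huR, hZ, -⟩, hx⟩
    exact ⟨u, huR, hZ, hx⟩
  · rintro ⟨u, huR, hZ, hx⟩
    -- the topmost node of `R` above `x` whose variables lie in `Zq` is useful
    let T := R.filter fun v => vars v ⊆ Zq ∧ x ∈ subtreeSet parent v
    obtain ⟨m, hmT, hmin⟩ := T.exists_min_image (depth hreach) ⟨u, by simp [T, huR, hZ, hx]⟩
    simp only [T, Finset.mem_filter] at hmT
    refine ⟨m, ⟨hmT.1, hmT.2.1, fun v ⟨hvm, hvR⟩ hvZ => ?_⟩, hmT.2.2⟩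
    have hvT : v ∈ T := by
      simp only [T, Finset.mem_filter]
      exact ⟨hvR, hvZ, mem_subtreeSet_trans hmT.2.2 (mem_ancSet_iff.1 hvm).2⟩
    exact (hmin v hvT).not_gt (depth_lt_of_mem_ancSet hroot hreach hvm)

lemma sum_useful_mul_util (hroot : parent root = root)
    (hreach : ∀ u, ∃ n : ℕ, parent^[n] u = root) (c : V → ℝ) :
    ∑ u ∈ R, useful parent vars Zq u R * util parent c u =
      ∑ x ∈ R.biUnion (queryCover parent vars Zq), c x := by
  rw [← biUnion_subtreeFinset_useful hroot hreach,
    Finset.sum_biUnion pairwiseDisjoint_subtreeFinset_useful]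
  simp only [useful, ite_mul, one_mul, zero_mul, Finset.sum_filter]
  rfl

variable {Q : Type*} [Fintype Q] {Z : Q → Set α} {Pr : Q → ℝ} {c : V → ℝ}

lemma benefit_eq_sum_cover (hroot : parent root = root)
    (hreach : ∀ u, ∃ n : ℕ, parent^[n] u = root) :
    benefit parent vars Z Pr c =
      fun R => ∑ q, Pr q * ∑ x ∈ R.biUnion (queryCover parent vars (Z q)), c x := by
  ext R
  simp only [benefit, eInd, Finset.sum_mul, mul_assoc]
  rw [Finset.sum_comm]
  simp only [← Finset.mul_sum, sum_useful_mul_util hroot hreach]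

lemma monotone_benefit (hroot : parent root = root)
    (hreach : ∀ u, ∃ n : ℕ, parent^[n] u = root) (hPr : ∀ q, 0 ≤ Pr q) (hc : ∀ x, 0 ≤ c x) :
    Monotone (benefit parent vars Z Pr c) := by
  rw [benefit_eq_sum_cover hroot hreach]
  exact fun _ _ h => Finset.sum_le_sum fun q _ =>
    mul_le_mul_of_nonneg_left (monotone_sum_biUnion _ hc h) (hPr q)

lemma boundedByMarginalGains_benefit (hroot : parent root = root)
    (hreach : ∀ u, ∃ n : ℕ, parent^[n] u = root) (hPr : ∀ q, 0 ≤ Pr q) (hc : ∀ x, 0 ≤ c x) :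
    BoundedByMarginalGains (benefit parent vars Z Pr c) := by
  rw [benefit_eq_sum_cover hroot hreach]
  exact boundedByMarginalGains_sum_mul hPr fun q => boundedByMarginalGains_sum_biUnion _ hc

end Benefit

theorem greedy_approximation_general {V α Q : Type*} [Fintype V] [DecidableEq V] [Fintype Q]
    (root : V) (parent : V → V)
    (hroot : parent root = root)
    (hreach : ∀ u, ∃ n : ℕ, parent^[n] u = root)
    (vars : V → Set α)
    (Z : Q → Set α) (Pr : Q → ℝ)
    (hPr0 : ∀ q, 0 ≤ Pr q)
    (c : V → ℝ) (hc : ∀ x, 0 ≤ c x)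
    (k : ℕ) (hk : 0 < k)
    (Rseq : ℕ → Finset V) (hR0 : Rseq 0 = ∅)
    (hgreedy : ∀ i, i < k → ∃ u, u ∉ Rseq i ∧ Rseq (i + 1) = insert u (Rseq i) ∧
      ∀ w, w ∉ Rseq i →
        benefit parent vars Z Pr c (insert w (Rseq i)) -
            benefit parent vars Z Pr c (Rseq i) ≤
          benefit parent vars Z Pr c (insert u (Rseq i)) -
            benefit parent vars Z Pr c (Rseq i)) :
    ∀ R : Finset V, R.card ≤ k →
      (1 - 1 / Real.exp 1) * benefit parent vars Z Pr c R ≤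
        benefit parent vars Z Pr c (Rseq k) := fun _ hR =>
  one_sub_inv_exp_mul_le_greedy (monotone_benefit hroot hreach hPr0 hc)
    (boundedByMarginalGains_benefit hroot hreach hPr0 hc) Finset.sum_empty hk hR Rseq hR0
    fun i hi => (hgreedy i hi).imp fun _ hu => hu.2

/-- Greedy guarantee: the greedy sequence `R_0 = ∅`,
`R_{i+1} = R_i ∪ {u_i}` with `u_i ∉ R_i` maximizing the marginal benefit,
satisfies `B(R_k) ≥ (1 − 1/e) · max{B(R) : R ⊆ V, |R| ≤ k}`. -/
theorem greedy_approximation {V α Q : Type*} [Fintype V] [DecidableEq V] [Fintype Q]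
    (root : V) (parent : V → V)
    (hroot : parent root = root)
    (hreach : ∀ u, ∃ n : ℕ, parent^[n] u = root)
    (vars : V → Set α)
    (hvars : ∀ u v : V, v ∈ ancSet parent u → vars u ⊆ vars v)
    (Z : Q → Set α) (Pr : Q → ℝ)
    (hPr0 : ∀ q, 0 ≤ Pr q) (hPr1 : ∑ q : Q, Pr q = 1)
    (c : V → ℝ) (hc : ∀ x, 0 ≤ c x)
    (k : ℕ) (hk : 0 < k) (hkcard : k ≤ Fintype.card V)
    (Rseq : ℕ → Finset V) (hR0 : Rseq 0 = ∅)
    (hgreedy : ∀ i, i < k → ∃ u, u ∉ Rseq i ∧ Rseq (i + 1) = insert u (Rseq i) ∧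
      ∀ w, w ∉ Rseq i →
        benefit parent vars Z Pr c (insert w (Rseq i)) -
            benefit parent vars Z Pr c (Rseq i) ≤
          benefit parent vars Z Pr c (insert u (Rseq i)) -
            benefit parent vars Z Pr c (Rseq i)) :
    ∀ R : Finset V, R.card ≤ k →
      (1 - 1 / Real.exp 1) * benefit parent vars Z Pr c R ≤
        benefit parent vars Z Pr c (Rseq k) :=
  greedy_approximation_general root parent hroot hreach vars Z Pr hPr0 c hc k hk Rseq hR0 hgreedy
end

section
/- For every Bayesian network N on a nonempty variable set X and every elimination order σ on X, the elimination graph of (N, σ) is a tree (i.e., its underlying undirected graph is connected and acyclic) if and only if N is weakly connected. -/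
open scoped Classical

section ElimDefs

variable {X : Type*}

/-- The scope of the leaf node `F_x`: `{x} ∪ parents(x)` in the network `E`. -/
noncomputable def leafScope [Fintype X] [DecidableEq X] (E : X → X → Prop) (x : X) : Finset X :=
  insert x (Finset.univ.filter (fun y => E y x))

/-- `i` is the first position (w.r.t. the elimination order `σ`) of a variable
belonging to `S`; a current node with scope `S` is consumed exactly at this step. -/
def minAt {n : ℕ} (σ : Fin n ≃ X) (S : Finset X) (i : Fin n) : Prop :=
  σ i ∈ S ∧ ∀ j : Fin n, σ j ∈ S → i ≤ j

/-- `IS` records the scopes of the internal nodes of the elimination graph of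
`(E, σ)`: `IS i` is the scope of the node `u_{σ i}` created at step `i`, namely
the union of the scopes of the current nodes containing `σ i` (the leaves `F_x`
first consumed at step `i`, and the internal nodes `u_{σ j}`, `j < i`, first
consumed at step `i`), with `σ i` removed. -/
def elimRec [Fintype X] [DecidableEq X] (E : X → X → Prop) {n : ℕ} (σ : Fin n ≃ X)
    (IS : Fin n → Finset X) : Prop :=
  ∀ i : Fin n, IS i =
    ((Finset.univ.filter (fun x : X => minAt σ (leafScope E x) i)).biUnion
        (leafScope E) ∪
     (Finset.univ.filter (fun j : Fin n => j < i ∧ minAt σ (IS j) i)).biUnion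
        IS).erase (σ i)

/-- The directed edges of the elimination graph: each node consumed at step `i`
points to the internal node `u_{σ i}` created at step `i`.  `Sum.inl x` is the
leaf `F_x` and `Sum.inr i` is the internal node `u_{σ i}`. -/
def elimEdge [Fintype X] [DecidableEq X] (E : X → X → Prop) {n : ℕ} (σ : Fin n ≃ X)
    (IS : Fin n → Finset X) : X ⊕ Fin n → X ⊕ Fin n → Prop :=
  fun a b =>
    match a, b with
    | Sum.inl x, Sum.inr i => minAt σ (leafScope E x) i
    | Sum.inr j, Sum.inr i => j < i ∧ minAt σ (IS j) i
    | _, _ => False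

/-- The underlying undirected graph of the elimination graph of `(E, σ)`. -/
def elimGraph [Fintype X] [DecidableEq X] (E : X → X → Prop) {n : ℕ} (σ : Fin n ≃ X)
    (IS : Fin n → Finset X) : SimpleGraph (X ⊕ Fin n) where
  Adj a b := a ≠ b ∧ (elimEdge E σ IS a b ∨ elimEdge E σ IS b a)
  symm := ⟨fun _a _b h => ⟨h.1.symm, h.2.symm⟩⟩
  loopless := ⟨fun _a h => h.1 rfl⟩

/-- The underlying undirected graph of the Bayesian network `E`. -/
def bnGraph (E : X → X → Prop) : SimpleGraph X where
  Adj a b := a ≠ b ∧ (E a b ∨ E b a)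
  symm := ⟨fun _a _b h => ⟨h.1.symm, h.2.symm⟩⟩
  loopless := ⟨fun _a h => h.1 rfl⟩

end ElimDefs

/-!
Orient each edge of the elimination graph from a node to the node that consumes it. Edges then go
forward in time and every node has at most one out-edge, so a cycle would have to leave its
earliest node along two different edges: the elimination graph is always a forest. For
connectivity, attach the variable `x` to both `F_x` and `u_x`. A variable `y` in the scope of a
node is passed along the chain of nodes consuming it until `u_y` is created, so the node is joined
to `u_y`; conversely, the scope of `u_x` only collects variables joined to `x` in `N`. Hence two
nodes are joined in the elimination graph iff their variables are joined in `N`.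
-/

open SimpleGraph

theorem SimpleGraph.Reachable.of_adj_reachable {V W : Type*} {G : SimpleGraph V}
    {H : SimpleGraph W} (f : V → W) (h : ∀ a b, G.Adj a b → H.Reachable (f a) (f b))
    {a b : V} (hab : G.Reachable a b) : H.Reachable (f a) (f b) := by
  rw [reachable_iff_reflTransGen] at hab ⊢
  exact Relation.ReflTransGen.lift' f
    (fun a b hab => (reachable_iff_reflTransGen _ _).1 (h a b hab)) _ _ hab

theorem SimpleGraph.isAcyclic_of_orientation {V α : Type*} [LinearOrder α] {G : SimpleGraph V}
    (r : V → α) (R : V → V → Prop) (hadj : ∀ a b, G.Adj a b → R a b ∨ R b a)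
    (hr : ∀ a b, R a b → r a < r b) (hR : ∀ a b c, R a b → R a c → b = c) :
    G.IsAcyclic := by
  intro v c hc
  obtain ⟨u, hu, hmin⟩ := c.support.toFinset.exists_min_image r
    ⟨v, List.mem_toFinset.2 c.start_mem_support⟩
  rw [List.mem_toFinset] at hu
  set c' := c.rotate u hu
  have hc' : c'.IsCycle := hc.rotate hu
  have hout : ∀ w ∈ c'.support, G.Adj u w → R u w := fun w hw huw =>
    (hadj u w huw).resolve_right fun hwu => (hr w u hwu).not_ge
      (hmin w (List.mem_toFinset.2 ((c.mem_support_rotate_iff u hu).1 hw)))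
  have hsnd := hout _ (c'.getVert_mem_support 1) (c'.adj_snd hc'.not_nil)
  have hpen := hout _ (c'.getVert_mem_support _) (c'.adj_penultimate hc'.not_nil).symm
  exact hc'.snd_ne_penultimate (hR _ _ _ hsnd hpen)

section MinAt

variable {X : Type*} {n : ℕ} {σ : Fin n ≃ X} {S : Finset X} {i j : Fin n}

theorem minAt.unique (hi : minAt σ S i) (hj : minAt σ S j) : i = j :=
  le_antisymm (hi.2 j hj.1) (hj.2 i hi.1)

theorem minAt.le_symm_apply (hi : minAt σ S i) {y : X} (hy : y ∈ S) : i ≤ σ.symm y :=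
  hi.2 _ (by rwa [Equiv.apply_symm_apply])

theorem exists_minAt (σ : Fin n ≃ X) (hS : S.Nonempty) : ∃ i, minAt σ S i := by
  obtain ⟨y, hy, hmin⟩ := S.exists_min_image σ.symm hS
  exact ⟨σ.symm y, by rwa [Equiv.apply_symm_apply], fun j hj => by
    simpa using hmin _ hj⟩

end MinAt

section ElimGraph

variable {X : Type*} [Fintype X] [DecidableEq X] {E : X → X → Prop} {n : ℕ} {σ : Fin n ≃ X}
  {IS : Fin n → Finset X}

theorem mem_leafScope_self (x : X) : x ∈ leafScope E x :=
  Finset.mem_insert_self _ _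

theorem mem_leafScope_of_rel {x y : X} (h : E y x) : y ∈ leafScope E x :=
  Finset.mem_insert_of_mem (Finset.mem_filter.2 ⟨Finset.mem_univ _, h⟩)

theorem mem_IS_iff (hIS : elimRec E σ IS) {i : Fin n} {y : X} :
    y ∈ IS i ↔ y ≠ σ i ∧
      ((∃ x, minAt σ (leafScope E x) i ∧ y ∈ leafScope E x) ∨
        ∃ j < i, minAt σ (IS j) i ∧ y ∈ IS j) := by
  rw [hIS i]
  simp [and_assoc]

theorem lt_symm_apply_of_mem_IS (hIS : elimRec E σ IS) {i : Fin n} {y : X} (hy : y ∈ IS i) :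
    i < σ.symm y := by
  obtain ⟨hne, ⟨x, hx, hyx⟩ | ⟨j, -, hj, hyj⟩⟩ := (mem_IS_iff hIS).1 hy
  · exact (hx.le_symm_apply hyx).lt_of_ne fun h => hne (by rw [h, Equiv.apply_symm_apply])
  · exact (hj.le_symm_apply hyj).lt_of_ne fun h => hne (by rw [h, Equiv.apply_symm_apply])

theorem elimGraph_reachable_of_mem_IS (hIS : elimRec E σ IS) {i : Fin n} {y : X}
    (hy : y ∈ IS i) : (elimGraph E σ IS).Reachable (.inr i) (.inr (σ.symm y)) := by
  obtain ⟨m, hm⟩ := exists_minAt σ ⟨y, hy⟩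
  have him : i < m := by simpa using lt_symm_apply_of_mem_IS hIS hm.1
  have hadj : (elimGraph E σ IS).Adj (.inr i) (.inr m) := ⟨by simpa using him.ne, .inl ⟨him, hm⟩⟩
  obtain hmy | hmy := (hm.le_symm_apply hy).eq_or_lt
  · exact hmy ▸ hadj.reachable
  · have hy' : y ∈ IS m := (mem_IS_iff hIS).2
      ⟨fun h => hmy.ne (by simp [h]), .inr ⟨i, him, hm, hy⟩⟩
    exact hadj.reachable.trans (elimGraph_reachable_of_mem_IS hIS hy')
termination_by (σ.symm y : ℕ) - i
decreasing_by
  have := lt_symm_apply_of_mem_IS hIS hy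
  simp only [Fin.lt_def] at him this
  omega

theorem elimGraph_reachable_of_mem_leafScope (hIS : elimRec E σ IS) {x y : X}
    (hy : y ∈ leafScope E x) : (elimGraph E σ IS).Reachable (.inl x) (.inr (σ.symm y)) := by
  obtain ⟨m, hm⟩ := exists_minAt σ ⟨y, hy⟩
  have hadj : (elimGraph E σ IS).Adj (.inl x) (.inr m) := ⟨Sum.inl_ne_inr, .inl hm⟩
  obtain hmy | hmy := (hm.le_symm_apply hy).eq_or_lt
  · exact hmy ▸ hadj.reachable
  · have hy' : y ∈ IS m := (mem_IS_iff hIS).2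
      ⟨fun h => hmy.ne (by simp [h]), .inl ⟨x, hm, hy⟩⟩
    exact hadj.reachable.trans (elimGraph_reachable_of_mem_IS hIS hy')

theorem bnGraph_reachable_of_mem_leafScope {x y : X} (hy : y ∈ leafScope E x) :
    (bnGraph E).Reachable x y := by
  rcases Finset.mem_insert.1 hy with rfl | hyx
  · rfl
  by_cases hne : y = x
  · rw [hne]
  · have hadj : (bnGraph E).Adj y x := ⟨hne, .inl (Finset.mem_filter.1 hyx).2⟩
    exact hadj.reachable.symm

theorem bnGraph_reachable_of_mem_IS (hIS : elimRec E σ IS) {i : Fin n} {y : X}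
    (hy : y ∈ IS i) : (bnGraph E).Reachable (σ i) y := by
  obtain ⟨-, ⟨x, hx, hyx⟩ | ⟨j, hji, hj, hyj⟩⟩ := (mem_IS_iff hIS).1 hy
  · exact (bnGraph_reachable_of_mem_leafScope hx.1).symm.trans
      (bnGraph_reachable_of_mem_leafScope hyx)
  · exact (bnGraph_reachable_of_mem_IS hIS hj.1).symm.trans (bnGraph_reachable_of_mem_IS hIS hyj)
termination_by i

def elimNodeVar (σ : Fin n ≃ X) : X ⊕ Fin n → X := Sum.elim id σ

theorem bnGraph_reachable_of_elimEdge (hIS : elimRec E σ IS) {a b : X ⊕ Fin n}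
    (h : elimEdge E σ IS a b) : (bnGraph E).Reachable (elimNodeVar σ a) (elimNodeVar σ b) := by
  rcases a with x | j <;> rcases b with y | i
  all_goals simp only [elimEdge] at h
  · exact bnGraph_reachable_of_mem_leafScope h.1
  · exact bnGraph_reachable_of_mem_IS hIS h.2.1

theorem elimGraph_reachable_elimNodeVar (hIS : elimRec E σ IS) (a : X ⊕ Fin n) :
    (elimGraph E σ IS).Reachable a (.inl (elimNodeVar σ a)) := by
  rcases a with x | i
  · rfl
  · simpa [elimNodeVar] using
      (elimGraph_reachable_of_mem_leafScope hIS (mem_leafScope_self (E := E) (σ i))).symm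

theorem elimGraph_reachable_of_bnGraph_adj (hIS : elimRec E σ IS) {x y : X}
    (h : (bnGraph E).Adj x y) : (elimGraph E σ IS).Reachable (.inl x) (.inl y) := by
  have hself (z : X) : (elimGraph E σ IS).Reachable (.inl z) (.inr (σ.symm z)) :=
    elimGraph_reachable_of_mem_leafScope hIS (mem_leafScope_self z)
  rcases h.2 with hxy | hyx
  · exact (hself x).trans
      (elimGraph_reachable_of_mem_leafScope hIS (mem_leafScope_of_rel hxy)).symm
  · exact (elimGraph_reachable_of_mem_leafScope hIS (mem_leafScope_of_rel hyx)).trans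
      (hself y).symm

theorem elimGraph_reachable_iff (hIS : elimRec E σ IS) {a b : X ⊕ Fin n} :
    (elimGraph E σ IS).Reachable a b ↔
      (bnGraph E).Reachable (elimNodeVar σ a) (elimNodeVar σ b) := by
  refine ⟨Reachable.of_adj_reachable _ fun a b hab => ?_, fun h => ?_⟩
  · exact hab.2.elim (bnGraph_reachable_of_elimEdge hIS) fun h =>
      (bnGraph_reachable_of_elimEdge hIS h).symm
  · exact (elimGraph_reachable_elimNodeVar hIS a).trans <|
      (h.of_adj_reachable Sum.inl fun _ _ => elimGraph_reachable_of_bnGraph_adj hIS).trans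
        (elimGraph_reachable_elimNodeVar hIS b).symm

theorem elimGraph_connected_iff (hIS : elimRec E σ IS) :
    (elimGraph E σ IS).Connected ↔ (bnGraph E).Connected := by
  simp only [connected_iff, Preconnected, elimGraph_reachable_iff hIS]
  refine and_congr ⟨fun h x y => h (.inl x) (.inl y), fun h a b => h _ _⟩
    ⟨fun ⟨a⟩ => ⟨elimNodeVar σ a⟩, fun ⟨x⟩ => ⟨.inl x⟩⟩

theorem elimGraph_isAcyclic : (elimGraph E σ IS).IsAcyclic := by
  refine isAcyclic_of_orientation (Sum.elim (fun _ => 0) fun i : Fin n => (i : ℕ) + 1)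
    (elimEdge E σ IS) (fun a b h => h.2) ?_ ?_
  · rintro (x | j) (y | i) h <;> simp only [elimEdge] at h
    · simp
    · simpa using h.1
  · rintro (x | j) (y | i) (z | k) h₁ h₂ <;> simp only [elimEdge] at h₁ h₂
    · rw [h₁.unique h₂]
    · rw [h₁.2.unique h₂.2]

end ElimGraph

theorem elimination_graph_tree_iff_weakly_connected_general
    {X : Type*} [Fintype X] [DecidableEq X]
    (E : X → X → Prop)
    (σ : Fin (Fintype.card X) ≃ X)
    (IS : Fin (Fintype.card X) → Finset X)
    (hIS : elimRec E σ IS) :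
    (elimGraph E σ IS).IsTree ↔ (bnGraph E).Connected :=
  ⟨fun h => (elimGraph_connected_iff hIS).1 h.connected,
    fun h => ⟨(elimGraph_connected_iff hIS).2 h, elimGraph_isAcyclic⟩⟩

/-- for every Bayesian network (a finite DAG `E` on a nonempty
variable set `X`) and every elimination order `σ`, the elimination graph of
`(E, σ)` (whose internal scopes `IS` satisfy the construction recurrence) is a
tree — its underlying undirected graph is connected and acyclic — if and only
if `E` is weakly connected. -/
theorem elimination_graph_tree_iff_weakly_connected
    {X : Type*} [Fintype X] [DecidableEq X] [Nonempty X]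
    (E : X → X → Prop) (hacyc : ∀ x, ¬ Relation.TransGen E x x)
    (σ : Fin (Fintype.card X) ≃ X)
    (IS : Fin (Fintype.card X) → Finset X)
    (hIS : elimRec E σ IS) :
    (elimGraph E σ IS).IsTree ↔ (bnGraph E).Connected :=
  elimination_graph_tree_iff_weakly_connected_general E σ IS hIS
end

section
/- For every finite rooted tree T_in there exist a Bayesian network N and an elimination order σ on the variables of N such that the internal subgraph of the elimination graph of (N, σ) is isomorphic to T_in as a rooted tree. -/
/-!
Take the network in which the only parent of a non-root variable `x` is its tree parent `p x`,
and eliminate children before their parents (for instance by decreasing depth). Then the leaf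
`F_x = {x, p x}` is consumed when `x` is eliminated, so the internal node `u_x` has scope `{p x}`
(and `u_root` has empty scope); `u_x` is therefore consumed exactly when `p x` is eliminated,
i.e. it is a child of `u_{p x}`, and the internal subgraph is a copy of the tree.
-/

open scoped Classical

theorem exists_rank_map_lt_of_iterate_eq {W : Type*} (p : W → W) (w0 : W)
    (hreach : ∀ w, ∃ m : ℕ, p^[m] w = w0) :
    ∃ d : W → ℕ, ∀ w, w ≠ w0 → d (p w) < d w := by
  refine ⟨fun w => Nat.find (hreach w), fun w hw => ?_⟩
  obtain ⟨k, hk⟩ : ∃ k, Nat.find (hreach w) = k + 1 :=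
    Nat.exists_eq_succ_of_ne_zero fun h => hw (by simpa using Nat.find_eq_zero _ |>.mp h)
  have hpk : p^[k] (p w) = w0 := by
    have := Nat.find_spec (hreach w)
    rwa [hk, Function.iterate_succ_apply] at this
  show Nat.find (hreach (p w)) < Nat.find (hreach w)
  rw [hk]
  exact Nat.lt_succ_of_le (Nat.find_le hpk)

theorem exists_equiv_fin_monotone {W β : Type*} [Fintype W] [LinearOrder β] (f : W → β) :
    ∃ σ : Fin (Fintype.card W) ≃ W, Monotone (f ∘ σ) :=
  let e := (Fintype.equivFin W).symm
  ⟨(Tuple.sort (f ∘ e)).trans e, Tuple.monotone_sort (f ∘ e)⟩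

section TreeNetwork

variable {W : Type*} {n : ℕ} {σ : Fin n ≃ W} {p : W → W} {w0 : W}

def ChildrenFirst (p : W → W) (w0 : W) (σ : Fin n ≃ W) : Prop :=
  ∀ w, w ≠ w0 → σ.symm w < σ.symm (p w)

theorem exists_childrenFirst [Fintype W] (hreach : ∀ w, ∃ m : ℕ, p^[m] w = w0) :
    ∃ σ : Fin (Fintype.card W) ≃ W, ChildrenFirst p w0 σ := by
  obtain ⟨d, hd⟩ := exists_rank_map_lt_of_iterate_eq p w0 hreach
  obtain ⟨σ, hσ⟩ := exists_equiv_fin_monotone (OrderDual.toDual ∘ d)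
  exact ⟨σ, fun w hw => hσ.reflect_lt (by simpa using hd w hw)⟩

theorem ChildrenFirst.apply_eq_of_forall_le (hσ : ChildrenFirst p w0 σ) {i : Fin n}
    (hi : ∀ j, j ≤ i) : σ i = w0 := by
  by_contra h
  simpa using (hσ _ h).trans_le (hi _)

theorem minAt_iff_eq {S : Finset W} {i j : Fin n} (h : minAt σ S i) : minAt σ S j ↔ j = i :=
  ⟨fun hj => le_antisymm (hj.2 i h.1) (h.2 j hj.1), fun hj => hj ▸ h⟩

theorem minAt_singleton_iff {a : W} {i : Fin n} : minAt σ {a} i ↔ σ i = a := by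
  have ha : minAt σ {a} (σ.symm a) :=
    ⟨by simp, fun j hj => by rw [← Finset.mem_singleton.mp hj, σ.symm_apply_apply]⟩
  rw [minAt_iff_eq ha, Equiv.eq_symm_apply]

def treeNet (p : W → W) (w0 : W) (y x : W) : Prop := x ≠ w0 ∧ p x = y

theorem ChildrenFirst.treeNet_transGen_irrefl (hσ : ChildrenFirst p w0 σ) (x : W) :
    ¬ Relation.TransGen (treeNet p w0) x x := fun hx => by
  have hlt : Relation.TransGen (· > ·) (σ.symm x) (σ.symm x) :=
    hx.lift σ.symm fun a b (hab : treeNet p w0 a b) => hab.2 ▸ hσ b hab.1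
  rw [Relation.transGen_eq_self] at hlt
  exact lt_irrefl _ hlt

variable [DecidableEq W]

def parentScope (p : W → W) (w0 : W) (x : W) : Finset W := if x = w0 then ∅ else {p x}

theorem leafScope_treeNet [Fintype W] (x : W) :
    leafScope (treeNet p w0) x = insert x (parentScope p w0 x) := by
  unfold leafScope parentScope treeNet
  congr 1
  ext y
  split_ifs with hx <;> simp [hx, eq_comm]

theorem mem_parentScope_iff {x y : W} : y ∈ parentScope p w0 x ↔ x ≠ w0 ∧ y = p x := by
  unfold parentScope
  split_ifs with hx <;> simp [hx]

theorem minAt_parentScope_iff {x : W} {i : Fin n} :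
    minAt σ (parentScope p w0 x) i ↔ x ≠ w0 ∧ σ i = p x := by
  unfold parentScope
  split_ifs with hx
  · simp [minAt, hx]
  · simp [hx, minAt_singleton_iff]

theorem ChildrenFirst.notMem_parentScope (hσ : ChildrenFirst p w0 σ) (x : W) :
    x ∉ parentScope p w0 x := fun h =>
  have ⟨hx, hpx⟩ := mem_parentScope_iff.mp h
  (hσ x hx).ne (congrArg σ.symm hpx)

theorem ChildrenFirst.minAt_leafScope_treeNet_iff [Fintype W] (hσ : ChildrenFirst p w0 σ)
    {x : W} {i : Fin n} : minAt σ (leafScope (treeNet p w0) x) i ↔ σ i = x := by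
  have hx : minAt σ (leafScope (treeNet p w0) x) (σ.symm x) := by
    refine ⟨by simp [leafScope_treeNet], fun j hj => ?_⟩
    rw [leafScope_treeNet, Finset.mem_insert] at hj
    rcases hj with hjx | hjp
    · simp [← hjx]
    · obtain ⟨hx0, hjp⟩ := mem_parentScope_iff.mp hjp
      exact (hσ x hx0).le.trans (by rw [← hjp, σ.symm_apply_apply])
  rw [minAt_iff_eq hx, Equiv.eq_symm_apply]

theorem ChildrenFirst.elimEdge_treeNet_iff [Fintype W] (hσ : ChildrenFirst p w0 σ)
    (j i : Fin n) :
    elimEdge (treeNet p w0) σ (parentScope p w0 ∘ σ) (Sum.inr j) (Sum.inr i) ↔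
      σ j ≠ w0 ∧ p (σ j) = σ i := by
  change j < i ∧ minAt σ (parentScope p w0 (σ j)) i ↔ _
  rw [minAt_parentScope_iff]
  refine ⟨fun ⟨_, hj, hi⟩ => ⟨hj, hi.symm⟩, fun ⟨hj, hi⟩ => ⟨?_, hj, hi.symm⟩⟩
  simpa [hi] using hσ (σ j) hj

theorem ChildrenFirst.elimRec_treeNet [Fintype W] (hσ : ChildrenFirst p w0 σ) :
    elimRec (treeNet p w0) σ (parentScope p w0 ∘ σ) := by
  intro i
  have hleaves :
      Finset.univ.filter (fun x => minAt σ (leafScope (treeNet p w0) x) i) = {σ i} := by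
    ext x
    simp [hσ.minAt_leafScope_treeNet_iff, eq_comm]
  have hinternal :
      (Finset.univ.filter fun j => j < i ∧ minAt σ ((parentScope p w0 ∘ σ) j) i).biUnion
        (parentScope p w0 ∘ σ) ⊆ {σ i} := by
    intro y hy
    simp only [Finset.mem_biUnion, Finset.mem_filter, Function.comp_apply,
      minAt_parentScope_iff] at hy
    obtain ⟨j, ⟨-, -, hj, hi⟩, hy⟩ := hy
    exact Finset.mem_singleton.mpr ((mem_parentScope_iff.mp hy).2.trans hi.symm)
  rw [hleaves, Finset.singleton_biUnion, Finset.erase_union_distrib, leafScope_treeNet,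
    Finset.erase_insert (hσ.notMem_parentScope _),
    (Finset.erase_eq_empty_iff _ _).mpr (Finset.subset_singleton_iff.mp hinternal),
    Finset.union_empty, Function.comp_apply]

end TreeNetwork

theorem internal_subgraph_realizes_any_rooted_tree_general
    {W : Type*} [Fintype W] [DecidableEq W] [Nonempty W]
    (p : W → W) (w0 : W)
    (hreach : ∀ w, ∃ m : ℕ, p^[m] w = w0) :
    ∃ (E : W → W → Prop) (σ : Fin (Fintype.card W) ≃ W)
      (IS : Fin (Fintype.card W) → Finset W),
      (∀ x, ¬ Relation.TransGen E x x) ∧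
      elimRec E σ IS ∧
      ∃ φ : Fin (Fintype.card W) ≃ W,
        φ ⟨Fintype.card W - 1, Nat.sub_lt Fintype.card_pos Nat.one_pos⟩ = w0 ∧
        ∀ j i : Fin (Fintype.card W),
          elimEdge E σ IS (Sum.inr j) (Sum.inr i) ↔
            (φ j ≠ w0 ∧ p (φ j) = φ i) := by
  obtain ⟨σ, hσ⟩ := exists_childrenFirst hreach
  refine ⟨treeNet p w0, σ, parentScope p w0 ∘ σ, hσ.treeNet_transGen_irrefl,
    hσ.elimRec_treeNet, σ, hσ.apply_eq_of_forall_le fun j => ?_, hσ.elimEdge_treeNet_iff⟩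
  exact Fin.mk_le_mk.mpr (Nat.le_sub_one_of_lt j.isLt)

/-- for every finite rooted tree `T_in` (given by a parent map
`p` on a nonempty finite node set `W` with root `w0`), there exist a Bayesian
network `E` and an elimination order `σ` on its variables such that the
internal subgraph of the elimination graph of `(E, σ)` — the induced subgraph
on the internal nodes `u_{σ i}`, rooted at the node created last — is
isomorphic to `T_in` as a rooted tree. -/
theorem internal_subgraph_realizes_any_rooted_tree
    {W : Type*} [Fintype W] [DecidableEq W] [Nonempty W]
    (p : W → W) (w0 : W) (hw0 : p w0 = w0)
    (hreach : ∀ w, ∃ m : ℕ, p^[m] w = w0) :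
    ∃ (E : W → W → Prop) (σ : Fin (Fintype.card W) ≃ W)
      (IS : Fin (Fintype.card W) → Finset W),
      (∀ x, ¬ Relation.TransGen E x x) ∧
      elimRec E σ IS ∧
      ∃ φ : Fin (Fintype.card W) ≃ W,
        φ ⟨Fintype.card W - 1, Nat.sub_lt Fintype.card_pos Nat.one_pos⟩ = w0 ∧
        ∀ j i : Fin (Fintype.card W),
          elimEdge E σ IS (Sum.inr j) (Sum.inr i) ↔
            (φ j ≠ w0 ∧ p (φ j) = φ i) :=
  internal_subgraph_realizes_any_rooted_tree_general p w0 hreach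
end
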